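/- For every f ∈ L²([0,1], ℝ), ∫_0^1 (∫_0^s f(t) dt)² ds ≤ (4/π²) ∫_0^1 f(t)² dt, and the constant 4/π² cannot be replaced by any smaller constant. -/

import Mathlib

/-!
Schur test with the test functions `cos (π t / 2)` and `sin (π s / 2)`: since
`∫₀ˢ cos (π t / 2) dt = (2 / π) sin (π s / 2)` and `∫ₜ¹ sin (π s / 2) ds = (2 / π) cos (π t / 2)`,
the Volterra operator `f ↦ ∫₀ˢ f` has norm at most `2 / π` on `L²[0, 1]`, and `cos (π t / 2)`
attains this bound.
-/

open MeasureTheory Set Function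
open scoped ENNReal

section SchurTest

variable {α β : Type*} [MeasurableSpace α] [MeasurableSpace β] {μ : Measure α} {ν : Measure β}

theorem ENNReal.sq_lintegral_le_lintegral_mul_lintegral_sq_div {g w : β → ℝ≥0∞}
    (hg : AEMeasurable g ν) (hw : AEMeasurable w ν) (hw0 : ∀ᵐ y ∂ν, w y ≠ 0)
    (hwtop : ∀ᵐ y ∂ν, w y ≠ ∞) :
    (∫⁻ y, g y ∂ν) ^ 2 ≤ (∫⁻ y, w y ∂ν) * ∫⁻ y, g y ^ 2 / w y ∂ν := by
  have hsqrt : ∀ x : ℝ≥0∞, (x ^ (1 / 2 : ℝ)) ^ 2 = x := fun x => by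
    rw [← ENNReal.rpow_natCast, ← ENNReal.rpow_mul]; norm_num
  have hfactor : ∫⁻ y, g y ∂ν
      = ∫⁻ y, ((fun y => w y ^ (1 / 2 : ℝ)) * fun y => (g y ^ 2 / w y) ^ (1 / 2 : ℝ)) y ∂ν := by
    refine lintegral_congr_ae ?_
    filter_upwards [hw0, hwtop] with y h0 htop
    rw [Pi.mul_apply, ← ENNReal.mul_rpow_of_nonneg _ _ (by norm_num),
      ENNReal.mul_div_cancel h0 htop, ← ENNReal.rpow_natCast, ← ENNReal.rpow_mul]
    norm_num
  have holder := ENNReal.lintegral_mul_le_Lp_mul_Lq ν Real.HolderConjugate.two_two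
    (hw.pow_const (1 / 2 : ℝ)) (((hg.pow_const 2).div hw).pow_const (1 / 2 : ℝ))
  simp only [ENNReal.rpow_two, hsqrt] at holder
  calc (∫⁻ y, g y ∂ν) ^ 2
      ≤ ((∫⁻ y, w y ∂ν) ^ (1 / 2 : ℝ) * (∫⁻ y, g y ^ 2 / w y ∂ν) ^ (1 / 2 : ℝ)) ^ 2 := by
        rw [hfactor]; gcongr; exact holder
    _ = (∫⁻ y, w y ∂ν) * ∫⁻ y, g y ^ 2 / w y ∂ν := by
        rw [mul_pow, hsqrt, hsqrt]

theorem lintegral_sq_lintegral_le_of_schur [SFinite μ] [SFinite ν] {K : α → β → ℝ≥0∞}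
    {p : β → ℝ≥0∞} {q : α → ℝ≥0∞} {g : β → ℝ≥0∞} {c₁ c₂ : ℝ≥0∞}
    (hK : Measurable (uncurry K)) (hp : AEMeasurable p ν) (hq : AEMeasurable q μ)
    (hg : AEMeasurable g ν) (hp0 : ∀ᵐ y ∂ν, p y ≠ 0) (hptop : ∀ᵐ y ∂ν, p y ≠ ∞)
    (hKp : ∀ᵐ x ∂μ, ∫⁻ y, K x y * p y ∂ν ≤ c₁ * q x)
    (hKq : ∀ᵐ y ∂ν, ∫⁻ x, K x y * q x ∂μ ≤ c₂ * p y) :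
    ∫⁻ x, (∫⁻ y, K x y * g y ∂ν) ^ 2 ∂μ ≤ c₁ * c₂ * ∫⁻ y, g y ^ 2 ∂ν := by
  set r : β → ℝ≥0∞ := fun y => g y ^ 2 / p y
  have hr : AEMeasurable r ν := (hg.pow_const 2).div hp
  have hKx : ∀ x, Measurable (K x) := fun x => hK.of_uncurry_left
  have hcs : ∀ x, (∫⁻ y, K x y * g y ∂ν) ^ 2
      ≤ (∫⁻ y, K x y * p y ∂ν) * ∫⁻ y, K x y * r y ∂ν := by
    intro x
    have hac := withDensity_absolutelyContinuous ν (K x)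
    have hdens : ∀ h : β → ℝ≥0∞, AEMeasurable h ν →
        ∫⁻ y, K x y * h y ∂ν = ∫⁻ y, h y ∂ν.withDensity (K x) := fun h hh =>
      (lintegral_withDensity_eq_lintegral_mul₀ (hKx x).aemeasurable hh).symm
    rw [hdens g hg, hdens p hp, hdens r hr]
    exact ENNReal.sq_lintegral_le_lintegral_mul_lintegral_sq_div (hg.mono_ac hac)
      (hp.mono_ac hac) (hac.ae_le hp0) (hac.ae_le hptop)
  have hswap : AEMeasurable (uncurry fun x y => c₁ * (K x y * q x) * r y) (μ.prod ν) :=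
    ((hK.aemeasurable.mul hq.comp_fst).const_mul c₁).mul hr.comp_snd
  calc ∫⁻ x, (∫⁻ y, K x y * g y ∂ν) ^ 2 ∂μ
      ≤ ∫⁻ x, c₁ * q x * ∫⁻ y, K x y * r y ∂ν ∂μ := by
        refine lintegral_mono_ae ?_
        filter_upwards [hKp] with x hx
        exact (hcs x).trans (by gcongr)
    _ = ∫⁻ x, ∫⁻ y, c₁ * (K x y * q x) * r y ∂ν ∂μ := by
        refine lintegral_congr fun x => ?_
        have hKr : AEMeasurable (fun y => K x y * r y) ν := (hKx x).aemeasurable.mul hr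
        rw [← lintegral_const_mul'' _ hKr]
        congr 1 with y
        ring
    _ = ∫⁻ y, c₁ * (∫⁻ x, K x y * q x ∂μ) * r y ∂ν := by
        rw [lintegral_lintegral_swap hswap]
        refine lintegral_congr fun y => ?_
        have hKqy : AEMeasurable (fun x => K x y * q x) μ :=
          hK.of_uncurry_right.aemeasurable.mul hq
        rw [lintegral_mul_const'' _ (hKqy.const_mul c₁),
          lintegral_const_mul'' _ hKqy]
    _ ≤ ∫⁻ y, c₁ * c₂ * g y ^ 2 ∂ν := by
        refine lintegral_mono_ae ?_
        filter_upwards [hKq, hp0, hptop] with y hy h0 htop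
        calc c₁ * (∫⁻ x, K x y * q x ∂μ) * r y ≤ c₁ * (c₂ * p y) * r y := by gcongr
          _ = c₁ * c₂ * g y ^ 2 := by
            rw [mul_assoc c₁, mul_assoc, mul_assoc, ENNReal.mul_div_cancel h0 htop]
    _ = c₁ * c₂ * ∫⁻ y, g y ^ 2 ∂ν := lintegral_const_mul'' _ (hg.pow_const 2)

end SchurTest

theorem lintegral_ofReal_Icc_eq_ofReal_intervalIntegral {f : ℝ → ℝ} {a b : ℝ} (hab : a ≤ b)
    (hf : ContinuousOn f (Icc a b)) (hf0 : ∀ x ∈ Icc a b, 0 ≤ f x) :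
    ∫⁻ x in Icc a b, ENNReal.ofReal (f x) = ENNReal.ofReal (∫ x in a..b, f x) := by
  rw [intervalIntegral.integral_of_le hab, ← integral_Icc_eq_integral_Ioc,
    ofReal_integral_eq_lintegral_ofReal hf.integrableOn_Icc
      (ae_restrict_of_forall_mem measurableSet_Icc hf0)]

theorem setLIntegral_Icc_indicator_Iic_mul {g : ℝ → ℝ≥0∞} {a b s : ℝ} (hs : s ≤ b) :
    ∫⁻ t in Icc a b, (Iic s).indicator 1 t * g t = ∫⁻ t in Icc a s, g t := by
  simp only [← indicator_mul_left, Pi.one_apply, one_mul]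
  have hset : Iic s ∩ Icc a b = Icc a s := by
    ext x
    simp only [mem_inter_iff, mem_Iic, mem_Icc]
    exact ⟨fun h => ⟨h.2.1, h.1⟩, fun h => ⟨h.2, h.1, h.2.trans hs⟩⟩
  rw [lintegral_indicator measurableSet_Iic, Measure.restrict_restrict measurableSet_Iic, hset]

theorem setLIntegral_Icc_indicator_Iic_mul' {g : ℝ → ℝ≥0∞} {a b t : ℝ} (ht : a ≤ t) :
    ∫⁻ s in Icc a b, (Iic s).indicator 1 t * g s = ∫⁻ s in Icc t b, g s := by
  have hind : ∀ s, (Iic s).indicator (1 : ℝ → ℝ≥0∞) t = (Ici t).indicator 1 s := fun s => by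
    simp only [indicator, mem_Iic, mem_Ici, Pi.one_apply]
  simp only [hind, ← indicator_mul_left, Pi.one_apply, one_mul]
  have hset : Ici t ∩ Icc a b = Icc t b := by
    ext x
    simp only [mem_inter_iff, mem_Ici, mem_Icc]
    exact ⟨fun h => ⟨h.1, h.2.2⟩, fun h => ⟨h.1, ht.trans h.1, h.2⟩⟩
  rw [lintegral_indicator measurableSet_Ici, Measure.restrict_restrict measurableSet_Ici, hset]

open Real

theorem integral_cos_pi_div_two_mul (s : ℝ) :
    ∫ t in (0 : ℝ)..s, cos (π / 2 * t) = 2 / π * sin (π / 2 * s) := by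
  rw [intervalIntegral.integral_comp_mul_left cos (by positivity), integral_cos]
  simp only [mul_zero, sin_zero, sub_zero, smul_eq_mul]
  field_simp

theorem integral_sin_pi_div_two_mul (t : ℝ) :
    ∫ s in t..1, sin (π / 2 * s) = 2 / π * cos (π / 2 * t) := by
  rw [intervalIntegral.integral_comp_mul_left sin (by positivity), integral_sin, mul_one,
    cos_pi_div_two, smul_eq_mul]
  field_simp
  ring

theorem integral_cos_pi_div_two_mul_sq :
    ∫ t in (0 : ℝ)..1, cos (π / 2 * t) ^ 2 = 1 / 2 := by
  rw [intervalIntegral.integral_comp_mul_left (fun x => cos x ^ 2) (by positivity),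
    integral_cos_sq]
  simp only [mul_zero, mul_one, cos_zero, sin_zero, cos_pi_div_two, sin_pi_div_two, smul_eq_mul]
  field_simp
  ring

theorem integral_sin_pi_div_two_mul_sq :
    ∫ t in (0 : ℝ)..1, sin (π / 2 * t) ^ 2 = 1 / 2 := by
  rw [intervalIntegral.integral_comp_mul_left (fun x => sin x ^ 2) (by positivity),
    integral_sin_sq]
  simp only [mul_zero, mul_one, cos_zero, sin_zero, cos_pi_div_two, sin_pi_div_two, smul_eq_mul]
  field_simp
  ring

theorem cos_pi_div_two_mul_pos {t : ℝ} (ht : t ∈ Ico (0 : ℝ) 1) : 0 < cos (π / 2 * t) :=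
  cos_pos_of_mem_Ioo ⟨by nlinarith [ht.1, pi_pos], by nlinarith [ht.2, pi_pos]⟩

theorem cos_pi_div_two_mul_nonneg {t : ℝ} (ht : t ∈ Icc (0 : ℝ) 1) : 0 ≤ cos (π / 2 * t) :=
  cos_nonneg_of_mem_Icc ⟨by nlinarith [ht.1, pi_pos], by nlinarith [ht.2, pi_pos]⟩

theorem sin_pi_div_two_mul_nonneg {t : ℝ} (ht : t ∈ Icc (0 : ℝ) 1) : 0 ≤ sin (π / 2 * t) :=
  sin_nonneg_of_nonneg_of_le_pi (by nlinarith [ht.1, pi_pos]) (by nlinarith [ht.2, pi_pos])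

theorem setLIntegral_Icc_ofReal_cos_pi_div_two_mul {s : ℝ} (hs : s ∈ Icc (0 : ℝ) 1) :
    ∫⁻ t in Icc 0 s, ENNReal.ofReal (cos (π / 2 * t))
      = ENNReal.ofReal (2 / π) * ENNReal.ofReal (sin (π / 2 * s)) := by
  rw [lintegral_ofReal_Icc_eq_ofReal_intervalIntegral hs.1 (by fun_prop)
      fun t ht => cos_pi_div_two_mul_nonneg ⟨ht.1, ht.2.trans hs.2⟩,
    integral_cos_pi_div_two_mul, ENNReal.ofReal_mul (by positivity)]

theorem setLIntegral_Icc_ofReal_sin_pi_div_two_mul {t : ℝ} (ht : t ∈ Icc (0 : ℝ) 1) :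
    ∫⁻ s in Icc t 1, ENNReal.ofReal (sin (π / 2 * s))
      = ENNReal.ofReal (2 / π) * ENNReal.ofReal (cos (π / 2 * t)) := by
  rw [lintegral_ofReal_Icc_eq_ofReal_intervalIntegral ht.2 (by fun_prop)
      fun s hs => sin_pi_div_two_mul_nonneg ⟨ht.1.trans hs.1, hs.2⟩,
    integral_sin_pi_div_two_mul, ENNReal.ofReal_mul (by positivity)]

theorem lintegral_sq_setLIntegral_Icc_le {g : ℝ → ℝ≥0∞}
    (hg : AEMeasurable g (volume.restrict (Icc 0 1))) :
    ∫⁻ s in Icc 0 1, (∫⁻ t in Icc 0 s, g t) ^ 2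
      ≤ ENNReal.ofReal (4 / π ^ 2) * ∫⁻ t in Icc 0 1, g t ^ 2 := by
  have hK : Measurable (uncurry fun s t : ℝ => (Iic s).indicator (1 : ℝ → ℝ≥0∞) t) :=
    (measurable_const.indicator (measurableSet_le measurable_snd measurable_fst) :
      Measurable ({z : ℝ × ℝ | z.2 ≤ z.1}.indicator 1))
  have hcos_pos : ∀ᵐ t ∂volume.restrict (Icc (0 : ℝ) 1), 0 < cos (π / 2 * t) := by
    rw [← Measure.restrict_congr_set Ico_ae_eq_Icc]
    exact ae_restrict_of_forall_mem measurableSet_Ico fun t ht => cos_pi_div_two_mul_pos ht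
  have schur := lintegral_sq_lintegral_le_of_schur (μ := volume.restrict (Icc (0 : ℝ) 1))
    (p := fun t => ENNReal.ofReal (cos (π / 2 * t)))
    (q := fun s => ENNReal.ofReal (sin (π / 2 * s))) hK (by fun_prop) (by fun_prop) hg
    (hcos_pos.mono fun t ht => (ENNReal.ofReal_pos.2 ht).ne')
    (ae_of_all _ fun t => ENNReal.ofReal_ne_top)
    (ae_restrict_of_forall_mem measurableSet_Icc fun s hs => by
      rw [setLIntegral_Icc_indicator_Iic_mul hs.2, setLIntegral_Icc_ofReal_cos_pi_div_two_mul hs])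
    (ae_restrict_of_forall_mem measurableSet_Icc fun t ht => by
      rw [setLIntegral_Icc_indicator_Iic_mul' ht.1, setLIntegral_Icc_ofReal_sin_pi_div_two_mul ht])
  rw [show (4 / π ^ 2 : ℝ) = 2 / π * (2 / π) by ring, ENNReal.ofReal_mul (by positivity)]
  refine le_of_eq_of_le (setLIntegral_congr_fun measurableSet_Icc fun s hs => ?_) schur
  rw [setLIntegral_Icc_indicator_Iic_mul hs.2]

theorem ofReal_intervalIntegral_sq_eq_setLIntegral_enorm_sq {f : ℝ → ℝ} {a b : ℝ} (hab : a ≤ b)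
    (hf : IntegrableOn (fun x => f x ^ 2) (Icc a b)) :
    ENNReal.ofReal (∫ x in a..b, f x ^ 2) = ∫⁻ x in Icc a b, ‖f x‖ₑ ^ 2 := by
  rw [intervalIntegral.integral_of_le hab, ← integral_Icc_eq_integral_Ioc]
  simpa only [norm_pow, Real.norm_eq_abs, sq_abs, enorm_pow]
    using ofReal_integral_norm_eq_lintegral_enorm hf

theorem intervalIntegral_sq_primitive_le {f : ℝ → ℝ}
    (hf : MemLp f 2 (volume.restrict (Icc (0 : ℝ) 1))) :
    ∫ s in (0 : ℝ)..1, (∫ t in (0 : ℝ)..s, f t) ^ 2 ≤ 4 / π ^ 2 * ∫ t in (0 : ℝ)..1, f t ^ 2 := by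
  have hprimitive : ContinuousOn (fun s => ∫ t in (0 : ℝ)..s, f t) (Icc 0 1) := by
    have hfi : IntegrableOn f (uIcc 0 1) := by
      rw [uIcc_of_le zero_le_one]; exact hf.integrable one_le_two
    simpa only [uIcc_of_le zero_le_one] using intervalIntegral.continuousOn_primitive_interval hfi
  have hbound : ∀ s ∈ Icc (0 : ℝ) 1, ‖∫ t in (0 : ℝ)..s, f t‖ₑ ≤ ∫⁻ t in Icc 0 s, ‖f t‖ₑ :=
    fun s hs => by
      rw [intervalIntegral.integral_of_le hs.1]
      exact (enorm_integral_le_lintegral_enorm _).trans (lintegral_mono_set Ioc_subset_Icc_self)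
  have hrhs : 0 ≤ ∫ t in (0 : ℝ)..1, f t ^ 2 :=
    intervalIntegral.integral_nonneg zero_le_one fun t _ => sq_nonneg (f t)
  rw [← ENNReal.ofReal_le_ofReal_iff (by positivity), ENNReal.ofReal_mul (by positivity),
    ofReal_intervalIntegral_sq_eq_setLIntegral_enorm_sq zero_le_one
      (hprimitive.pow 2).integrableOn_Icc,
    ofReal_intervalIntegral_sq_eq_setLIntegral_enorm_sq zero_le_one hf.integrable_sq]
  calc ∫⁻ s in Icc 0 1, ‖∫ t in (0 : ℝ)..s, f t‖ₑ ^ 2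
      ≤ ∫⁻ s in Icc 0 1, (∫⁻ t in Icc 0 s, ‖f t‖ₑ) ^ 2 :=
        setLIntegral_mono' measurableSet_Icc fun s hs => by gcongr; exact hbound s hs
    _ ≤ _ := lintegral_sq_setLIntegral_Icc_le hf.aestronglyMeasurable.enorm

theorem intervalIntegral_sq_primitive_cos_pi_div_two_mul :
    ∫ s in (0 : ℝ)..1, (∫ t in (0 : ℝ)..s, cos (π / 2 * t)) ^ 2
      = 4 / π ^ 2 * ∫ t in (0 : ℝ)..1, cos (π / 2 * t) ^ 2 := by
  simp only [integral_cos_pi_div_two_mul, mul_pow, intervalIntegral.integral_const_mul,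
    integral_sin_pi_div_two_mul_sq, integral_cos_pi_div_two_mul_sq]
  ring

theorem four_div_pi_sq_le_of_forall_intervalIntegral_sq_primitive_le {c : ℝ}
    (hc : ∀ f : ℝ → ℝ, MemLp f 2 (volume.restrict (Icc (0 : ℝ) 1)) →
      ∫ s in (0 : ℝ)..1, (∫ t in (0 : ℝ)..s, f t) ^ 2 ≤ c * ∫ t in (0 : ℝ)..1, f t ^ 2) :
    4 / π ^ 2 ≤ c := by
  have hmem : MemLp (fun t => cos (π / 2 * t)) 2 (volume.restrict (Icc (0 : ℝ) 1)) :=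
    .of_bound (by fun_prop) 1 (ae_of_all _ fun t => by
      simpa only [Real.norm_eq_abs] using abs_cos_le_one _)
  have h := hc _ hmem
  rw [intervalIntegral_sq_primitive_cos_pi_div_two_mul, integral_cos_pi_div_two_mul_sq] at h
  linarith

/-- For every `f ∈ L²([0,1], ℝ)`,
`∫_0^1 (∫_0^s f(t) dt)² ds ≤ (4/π²) ∫_0^1 f(t)² dt`,
and the constant `4/π²` cannot be replaced by any smaller constant. -/
theorem volterra_inequality_sharp :
    (∀ f : ℝ → ℝ, MemLp f 2 (volume.restrict (Icc (0:ℝ) 1)) →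
      ∫ s in (0:ℝ)..1, (∫ t in (0:ℝ)..s, f t) ^ 2
        ≤ (4 / Real.pi ^ 2) * ∫ t in (0:ℝ)..1, f t ^ 2) ∧
    ∀ c : ℝ,
      (∀ f : ℝ → ℝ, MemLp f 2 (volume.restrict (Icc (0:ℝ) 1)) →
        ∫ s in (0:ℝ)..1, (∫ t in (0:ℝ)..s, f t) ^ 2
          ≤ c * ∫ t in (0:ℝ)..1, f t ^ 2) →
      4 / Real.pi ^ 2 ≤ c :=
  ⟨fun _ hf => intervalIntegral_sq_primitive_le hf,
    fun _ hc => four_div_pi_sq_le_of_forall_intervalIntegral_sq_primitive_le hc⟩
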